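/- arXiv:2603.01704 — 5 statements merged into one kernel-verified Lean document; each statement's English description precedes it below -/
import Mathlib

section
/- Let R be a commutative ring and π an element of R contained in the Jacobson radical of R, such that R is an integral domain (or more generally ⋂_{n≥1} π^n R = 0). If M is a finite projective R-module such that M/πM is a free (R/πR)-module, then M is a free R-module. -/
/-!
Lift a basis of `M/IM` to a map `g : (ι →₀ R) → M`. By Nakayama `g` is surjective; as `M` is
projective, `g` splits, so its kernel `K` is a finitely generated direct summand. Since `g`
reduces to an isomorphism modulo `I`, `K ⊆ I • (ι →₀ R)`, and the splitting gives `K = I • K`,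
so `K = 0` by Nakayama again.
-/

open Submodule

section

variable {R : Type*} [CommRing R] {F M : Type*} [AddCommGroup F] [Module R F]
  [AddCommGroup M] [Module R M]

theorem LinearMap.ker_inf_smul_top_le_smul_ker [Module.Projective R M] (g : F →ₗ[R] M)
    (hg : Function.Surjective g) (I : Ideal R) :
    LinearMap.ker g ⊓ I • ⊤ ≤ I • LinearMap.ker g := by
  obtain ⟨s, hs⟩ := Module.projective_lifting_property g LinearMap.id hg
  set p : F →ₗ[R] F := LinearMap.id - s ∘ₗ g
  have hp_range : LinearMap.range p ≤ LinearMap.ker g := by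
    rintro _ ⟨y, rfl⟩
    simp [p, ← LinearMap.comp_apply g s, hs]
  rintro y ⟨hy, hyI⟩
  have hpy : p y = y := by simp [p, LinearMap.mem_ker.mp hy]
  have : y ∈ (I • ⊤ : Submodule R F).map p := ⟨y, hyI, hpy⟩
  rw [map_smul'', Submodule.map_top] at this
  exact smul_mono_right I hp_range this

theorem LinearMap.injective_of_ker_le_smul_top [Module.Finite R F] [Module.Finite R M]
    [Module.Projective R M] (g : F →ₗ[R] M) (hg : Function.Surjective g) {I : Ideal R}
    (hI : I ≤ (⊥ : Ideal R).jacobson) (hker : LinearMap.ker g ≤ I • ⊤) :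
    Function.Injective g := by
  have := Module.finitePresentation_of_projective R M
  rw [← LinearMap.ker_eq_bot]
  refine eq_bot_of_le_smul_of_le_jacobson_bot I _ (Module.FinitePresentation.fg_ker g hg) ?_ hI
  exact le_inf le_rfl hker |>.trans (g.ker_inf_smul_top_le_smul_ker hg I)

theorem Module.free_of_free_quotient_smul_top [Module.Finite R M] [Module.Projective R M]
    {I : Ideal R} (hI : I ≤ (⊥ : Ideal R).jacobson)
    [Module.Free (R ⧸ I) (M ⧸ I • (⊤ : Submodule R M))] :
    Module.Free R M := by
  have := Module.Finite.of_restrictScalars_finite R (R ⧸ I) (M ⧸ I • (⊤ : Submodule R M))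
  let ι := Module.Free.ChooseBasisIndex (R ⧸ I) (M ⧸ I • (⊤ : Submodule R M))
  let b := Module.Free.chooseBasis (R ⧸ I) (M ⧸ I • (⊤ : Submodule R M))
  let f : (ι →₀ R) →ₗ[R] M ⧸ I • (⊤ : Submodule R M) :=
    (b.repr.symm.restrictScalars R).toLinearMap ∘ₗ Finsupp.mapRange.linearMap I.mkQ
  have hker_f : LinearMap.ker f = I • ⊤ := by
    simp only [f, LinearEquiv.ker_comp]
    rw [Finsupp.ker_mapRange, Submodule.ker_mkQ, ← I.mul_top, ← smul_eq_mul,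
      Finsupp.submodule_smul]
    simp
  obtain ⟨g, hg⟩ := Module.projective_lifting_property (I • (⊤ : Submodule R M)).mkQ f
    (mkQ_surjective _)
  have hf : Function.Surjective f :=
    b.repr.symm.surjective.comp (Finsupp.mapRange_surjective _ (map_zero _) I.mkQ_surjective)
  have hg_surj : Function.Surjective g :=
    g.surjective_of_surjective_comp_mkQ I hI (hg ▸ hf)
  have hg_inj : Function.Injective g := by
    refine g.injective_of_ker_le_smul_top hg_surj hI ?_
    rw [← hker_f, ← hg, LinearMap.ker_comp]
    exact LinearMap.ker_le_comap _
  exact Module.Free.of_equiv (LinearEquiv.ofBijective g ⟨hg_inj, hg_surj⟩)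

end

theorem statement_0_general {R : Type*} [CommRing R] (π : R)
    (hJ : π ∈ Ideal.jacobson (⊥ : Ideal R))
    {M : Type*} [AddCommGroup M] [Module R M] [Module.Finite R M] [Module.Projective R M]
    (hfree : Module.Free (R ⧸ Ideal.span {π})
      (M ⧸ (Ideal.span {π} • ⊤ : Submodule R M))) :
    Module.Free R M :=
  Module.free_of_free_quotient_smul_top (by rwa [Ideal.span_le, Set.singleton_subset_iff])

/-- Let `R` be a commutative ring and `π` an element of the Jacobson radical
of `R` such that `⋂_{n≥1} π^n R = 0`.  If `M` is a finite projective `R`-module such that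
`M/πM` is free over `R/πR`, then `M` is a free `R`-module. -/
theorem statement_0 {R : Type*} [CommRing R] (π : R)
    (hJ : π ∈ Ideal.jacobson (⊥ : Ideal R))
    (hsep : (⨅ n : ℕ, Ideal.span {π} ^ (n + 1)) = (⊥ : Ideal R))
    {M : Type*} [AddCommGroup M] [Module R M] [Module.Finite R M] [Module.Projective R M]
    (hfree : Module.Free (R ⧸ Ideal.span {π})
      (M ⧸ (Ideal.span {π} • ⊤ : Submodule R M))) :
    Module.Free R M :=
  statement_0_general π hJ hfree
end

section
/- Let R be a commutative ring with an injective ring endomorphism φ that is flat as a ring map, and let M be a finitely generated R-module with a φ-semilinear endomorphism φ_M such that the linearization R ⊗_{φ,R} M → M is an isomorphism. Then for every n ≥ 1, the π-torsion submodule M[π^n] = {x ∈ M : π^n x = 0} (for any π ∈ R) satisfies: the linearization R ⊗_{φ,R} M[π^n] → M[π^n] is an isomorphism. -/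
/-!
Torsion `M[π^n]` is the kernel of multiplication by `π^n` on `M`, which commutes with `φM`
because `φ` fixes `π`. Tensoring `0 → M[π^n] → M → M` with the flat `R`-module `R` (via `φ`)
keeps it left exact, and the linearizations form a morphism of left exact sequences whose
middle and right components are the bijective linearization of `M`; the five lemma does the rest.
-/

open TensorProduct

/-- Type synonym: `M` with the `R`-module structure twisted by `φ` (i.e. `r • m = φ r • m`).
For `M = R` this is "`R` viewed as an `R`-module via `φ`". -/
@[nolint unusedArguments]
def Twist (R : Type*) [CommRing R] (φ : R →+* R) (M : Type*) [AddCommGroup M] [Module R M] :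
    Type _ := M

namespace Twist

variable {R : Type*} [CommRing R] (φ : R →+* R) {M : Type*} [AddCommGroup M] [Module R M]

instance : AddCommGroup (Twist R φ M) := inferInstanceAs (AddCommGroup M)

instance : Module R (Twist R φ M) := Module.compHom M φ

theorem smul_def (r : R) (m : M) :
    (r • (show Twist R φ M from m)) = (show Twist R φ M from (φ r • m)) := rfl

end Twist

/-- The linearization `R ⊗_{φ,R} M → M`, `x ⊗ m ↦ x • φM m`, of a `φ`-semilinear map
`φM : M → M`.  It is `R`-linear when the left tensor factor and the target carry the
`φ`-twisted module structures.  An étale `φ`-module is a finite module `M` for which this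
map is bijective. -/
noncomputable def linearization {R : Type*} [CommRing R] (φ : R →+* R)
    {M : Type*} [AddCommGroup M] [Module R M] (φM : M →ₛₗ[φ] M) :
    TensorProduct R (Twist R φ R) M →ₗ[R] Twist R φ M :=
  TensorProduct.lift
    { toFun := fun x =>
        { toFun := fun m => show Twist R φ M from (show R from x) • φM m
          map_add' := fun a b => by
            show ((show R from x) • φM (a + b) : M) = (show R from x) • φM a + (show R from x) • φM b
            rw [map_add]; exact smul_add (id (α := R) x) (φM a) (φM b)
          map_smul' := fun r m => by
            show ((show R from x) • φM (r • m) : M) = φ r • ((show R from x) • φM m)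
            rw [LinearMap.map_smulₛₗ, smul_comm] }
      map_add' := fun x y => by
        ext m
        show ((show R from x) + (show R from y)) • φM m = (show R from x) • φM m + (show R from y) • φM m
        exact add_smul (id (α := R) x) (id (α := R) y) (φM m)
      map_smul' := fun r x => by
        ext m
        show (φ r * (show R from x)) • φM m = (φ r • ((show R from x) • φM m) : M)
        exact mul_smul (φ r) (id (α := R) x) (φM m) }

namespace Twist

variable {R : Type*} [CommRing R] (φ : R →+* R) {N M : Type*} [AddCommGroup N] [Module R N]
  [AddCommGroup M] [Module R M]

def map (f : N →ₗ[R] M) : Twist R φ N →ₗ[R] Twist R φ M where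
  toFun x := show M from f x
  map_add' := f.map_add
  map_smul' r := f.map_smul (φ r)

end Twist

section Linearization

variable {R : Type*} [CommRing R] {φ : R →+* R} {N M P : Type*}
  [AddCommGroup N] [Module R N] [AddCommGroup M] [Module R M] [AddCommGroup P] [Module R P]

theorem Twist.map_comp_linearization {φN : N →ₛₗ[φ] N} {φM : M →ₛₗ[φ] M} (f : N →ₗ[R] M)
    (hf : ∀ x, f (φN x) = φM (f x)) :
    (Twist.map φ f).comp (linearization φ φN) =
      (linearization φ φM).comp (f.lTensor (Twist R φ R)) := by
  refine TensorProduct.ext' fun a x => ?_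
  show f ((show R from a) • φN x) = (show R from a) • φM (f x)
  rw [f.map_smul, hf]

theorem bijective_linearization_of_exact [Module.Flat R (Twist R φ R)]
    {φN : N →ₛₗ[φ] N} {φM : M →ₛₗ[φ] M} {φP : P →ₛₗ[φ] P}
    {f : N →ₗ[R] M} {g : M →ₗ[R] P} (hf_inj : Function.Injective f) (hfg : Function.Exact f g)
    (hf : ∀ x, f (φN x) = φM (f x)) (hg : ∀ x, g (φM x) = φP (g x))
    (hM : Function.Bijective (linearization φ φM)) (hP : Function.Injective (linearization φ φP)) :
    Function.Bijective (linearization φ φN) :=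
  LinearMap.bijective_of_bijective_of_injective_of_left_exact
    (f.lTensor (Twist R φ R)) (g.lTensor (Twist R φ R)) (Twist.map φ f) (Twist.map φ g)
    (linearization φ φN) (linearization φ φM) (linearization φ φP)
    (Twist.map_comp_linearization f hf) (Twist.map_comp_linearization g hg)
    (Module.Flat.lTensor_exact _ hfg) hfg hM hP
    (Module.Flat.lTensor_preserves_injective_linearMap f hf_inj) hf_inj

end Linearization

theorem statement_2_general {R : Type*} [CommRing R] (φ : R →+* R)
    (hflat : Module.Flat R (Twist R φ R))
    {M : Type*} [AddCommGroup M] [Module R M]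
    (φM : M →ₛₗ[φ] M)
    (hetale : Function.Bijective (linearization φ φM))
    (π : R) (hπ : φ π = π) (n : ℕ)
    (ψ : ↥(Submodule.torsionBy R M (π ^ n)) →ₛₗ[φ] ↥(Submodule.torsionBy R M (π ^ n)))
    (hψ : ∀ m : ↥(Submodule.torsionBy R M (π ^ n)), (ψ m : M) = φM (m : M)) :
    Function.Bijective (linearization φ ψ) := by
  have hπ_smul : ∀ m : M, π ^ n • φM m = φM (π ^ n • m) := fun m => by
    rw [φM.map_smulₛₗ, map_pow, hπ]
  exact bijective_linearization_of_exact (φM := φM) (φP := φM) Subtype.val_injective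
    (LinearMap.exact_subtype_ker_map _) hψ hπ_smul hetale hetale.1

/-- Let `R` be a commutative ring with a flat injective endomorphism `φ`
(fixing `π`), and `M` an étale `φ`-module over `R` (finite, with bijective linearization
`R ⊗_{φ,R} M → M`).  Then for every `n ≥ 1` and `π ∈ R`, the `π^n`-torsion submodule
`M[π^n]` is again étale: any semilinear restriction of `φM` to `M[π^n]` has bijective
linearization `R ⊗_{φ,R} M[π^n] → M[π^n]`. -/
theorem statement_2 {R : Type*} [CommRing R] (φ : R →+* R)
    (hφinj : Function.Injective φ)
    (hflat : Module.Flat R (Twist R φ R))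
    {M : Type*} [AddCommGroup M] [Module R M] [Module.Finite R M]
    (φM : M →ₛₗ[φ] M)
    (hetale : Function.Bijective (linearization φ φM))
    (π : R) (hπ : φ π = π) (n : ℕ) (hn : 1 ≤ n)
    (ψ : ↥(Submodule.torsionBy R M (π ^ n)) →ₛₗ[φ] ↥(Submodule.torsionBy R M (π ^ n)))
    (hψ : ∀ m : ↥(Submodule.torsionBy R M (π ^ n)), (ψ m : M) = φM (m : M)) :
    Function.Bijective (linearization φ ψ) :=
  statement_2_general φ hflat φM hetale π hπ n ψ hψ
end

section
/- Let A = 𝔽((Y))⟨(Y_1/Y)^{±1},…,(Y_{f-1}/Y)^{±1}⟩ (a Banach algebra over a finite field 𝔽 of Laurent series in Y with restricted power series in invertible variables), with v the Y-adic valuation, and let φ_q be an injective 𝔽-algebra endomorphism with v(φ_q(a)) = q·v(a) for all a, where q > 1. Let M = A·e be a free A-module of rank 1 with φ_q(e) = λe for some λ ∈ A° with v(λ) = r ≥ 0. Then any element x = t·e with v(t) ≤ −r−1 does NOT lie in any finitely generated φ_q-stable A°-submodule of M; equivalently, the A°-module ∑_{i≥0} A° φ_q^i(x) is not finitely generated.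 -/
/-!
The twisted Frobenius `x ↦ φ_q(x) λ` sends an element of valuation `a` to one of valuation
`q a + r`, which is at most `a - 1` as soon as `a ≤ -r - 1`. Hence the iterates of `t` have
valuations tending to `-∞`. On the other hand every element of a finitely generated
`A°`-submodule has valuation at least the minimum of the valuations of its generators, since
`{y | B ≤ v y}` is itself an `A°`-submodule.
-/

namespace AddValuation

variable {A Γ₀ : Type*} [CommRing A] [LinearOrderedAddCommMonoidWithTop Γ₀]
  (v : AddValuation A Γ₀) {S : Subring A} (hS : ∀ s ∈ S, 0 ≤ v s)

def geSubmodule (B : Γ₀) : Submodule S A where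
  carrier := {y | B ≤ v y}
  zero_mem' := by simp
  add_mem' hx hy := le_min hx hy |>.trans (v.map_add _ _)
  smul_mem' s y hy := by
    change B ≤ v (s * y)
    rw [v.map_mul]
    exact le_add_of_nonneg_of_le (hS s s.2) hy

include hS in
theorem not_fg_of_forall_exists_lt {N : Submodule S A} (h : ∀ B : Γ₀, ∃ y ∈ N, v y < B) :
    ¬ N.FG := by
  rintro ⟨T, rfl⟩
  obtain ⟨y, hy, hlt⟩ := h (T.inf v)
  have hle : Submodule.span S T ≤ v.geSubmodule hS (T.inf v) :=
    Submodule.span_le.mpr fun _ hg => Finset.inf_le hg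
  exact (hle hy).not_gt hlt

end AddValuation

theorem WithTop.exists_lt_of_forall_le_sub {g : ℕ → WithTop ℤ} {c : ℤ}
    (hg : ∀ i : ℕ, g i ≤ ↑(c - i)) (B : WithTop ℤ) : ∃ i, g i < B := by
  induction B with
  | top => exact ⟨0, (hg 0).trans_lt (WithTop.coe_lt_top _)⟩
  | coe b =>
    refine ⟨(c - b + 1).toNat, (hg _).trans_lt ?_⟩
    exact WithTop.coe_lt_coe.mpr (by omega)

section TwistedFrobenius

variable {A : Type*} [CommRing A] (v : AddValuation A (WithTop ℤ)) {φq : A →+* A} {q : ℕ}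
  (hq : 1 < q) (hv : ∀ a : A, v (φq a) = q • v a) {lam : A} {r : ℤ} (hr : 0 ≤ r)
  (hlam : v lam = r)

include hq hv hr hlam

theorem valuation_map_mul_le_sub_one {x : A} {c : ℤ} (hc : c ≤ -r - 1) (hx : v x ≤ c) :
    v (φq x * lam) ≤ ↑(c - 1) := by
  obtain ⟨a, hva, hac⟩ := WithTop.le_coe_iff.mp hx
  rw [v.map_mul, hv, hlam, hva, ← WithTop.coe_nsmul, ← WithTop.coe_add, nsmul_eq_mul]
  have hq' : (2 : ℤ) ≤ q := by exact_mod_cast hq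
  exact WithTop.coe_le_coe.mpr <| by
    nlinarith [mul_le_mul_of_nonneg_left hac (by omega : (0 : ℤ) ≤ q),
      mul_le_mul_of_nonneg_left hc (by omega : (0 : ℤ) ≤ q - 1)]

theorem valuation_iterate_map_mul_le {t : A} (ht : v t ≤ ↑(-r - 1)) (i : ℕ) :
    v ((fun x => φq x * lam)^[i] t) ≤ ↑(-r - 1 - i) := by
  induction i with
  | zero => simpa using ht
  | succ n ih =>
    rw [Function.iterate_succ_apply']
    refine (valuation_map_mul_le_sub_one v hq hv hr hlam (by omega) ih).trans ?_
    exact WithTop.coe_le_coe.mpr (by omega)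

end TwistedFrobenius

theorem statement_4_general {A : Type*} [CommRing A]
    (v : AddValuation A (WithTop ℤ))
    (φq : A →+* A)
    (q : ℕ) (hq : 1 < q) (hv : ∀ a : A, v (φq a) = q • v a)
    (S : Subring A) (hS : ∀ x : A, x ∈ S ↔ 0 ≤ v x)
    (lam : A) (r : ℤ) (hr : 0 ≤ r) (hlam : v lam = (r : WithTop ℤ))
    (t : A) (ht : v t ≤ ((-r - 1 : ℤ) : WithTop ℤ))
    (φM : A → A) (hφM : ∀ x : A, φM x = φq x * lam) :
    (∀ N : Submodule ↥S A, (∀ y ∈ N, φM y ∈ N) → N.FG → t ∉ N) ∧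
    ¬ (Submodule.span ↥S (Set.range fun i : ℕ => φM^[i] t)).FG := by
  have hiter : ∀ i : ℕ, v (φM^[i] t) ≤ ↑(-r - 1 - i) := by
    rw [funext hφM]
    exact valuation_iterate_map_mul_le v hq hv hr hlam ht
  have not_fg : ∀ N : Submodule S A, (∀ i, φM^[i] t ∈ N) → ¬ N.FG := fun N hN =>
    v.not_fg_of_forall_exists_lt (fun s hs => (hS s).mp hs) fun B =>
      have ⟨i, hi⟩ := WithTop.exists_lt_of_forall_le_sub hiter B
      ⟨_, hN i, hi⟩
  refine ⟨fun N hstab hfg htN => not_fg N (fun i => ?_) hfg, not_fg _ fun i => ?_⟩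
  · exact Set.MapsTo.iterate hstab i htN
  · exact Submodule.subset_span ⟨i, rfl⟩

/-- Let `A` be a domain with an additive valuation `v` (written additively,
`v 0 = ⊤`), `φ_q` an injective endomorphism with `v (φ_q a) = q · v a` for some `q > 1`, and
`A° = S = {a : 0 ≤ v a}` the (Noetherian) ring of power-bounded elements.  Let `M = A·e` be
free of rank one with `φ_M(a·e) = φ_q(a)·λ·e` where `v λ = r ≥ 0` (identifying `M = A`, so
`φ_M x = φ_q x · λ`).  Then any `x = t·e` with `v t ≤ −r−1` does not lie in any finitely
generated `φ_M`-stable `A°`-submodule of `M`; equivalently, `∑_{i≥0} A°·φ_M^i(x)` is not a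
finitely generated `A°`-module. -/
theorem statement_4 {A : Type*} [CommRing A] [IsDomain A]
    (v : AddValuation A (WithTop ℤ))
    (φq : A →+* A) (hφinj : Function.Injective φq)
    (q : ℕ) (hq : 1 < q) (hv : ∀ a : A, v (φq a) = q • v a)
    (S : Subring A) (hS : ∀ x : A, x ∈ S ↔ 0 ≤ v x) [IsNoetherianRing ↥S]
    (lam : A) (r : ℤ) (hr : 0 ≤ r) (hlam : v lam = (r : WithTop ℤ))
    (t : A) (ht : v t ≤ ((-r - 1 : ℤ) : WithTop ℤ))
    (φM : A → A) (hφM : ∀ x : A, φM x = φq x * lam) :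
    (∀ N : Submodule ↥S A, (∀ y ∈ N, φM y ∈ N) → N.FG → t ∉ N) ∧
    ¬ (Submodule.span ↥S (Set.range fun i : ℕ => φM^[i] t)).FG :=
  statement_4_general v φq q hq hv S hS lam r hr hlam t ht φM hφM
end

section
/- Let R ⊆ S be an inclusion of commutative rings with a common element π such that: (1) the inclusion R → S is flat, (2) π lies in the Jacobson radical of both R and S, and (3) the induced map R/πR → S/πS is an isomorphism. Then R → S is faithfully flat. -/
/-!
A flat algebra is faithfully flat as soon as `m S ≠ S` for every maximal ideal `m` of `R`.
Since `π` is in the Jacobson radical, every such `m` contains `π`; the composite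
`R → S → S/πS` is then surjective with kernel `πR ⊆ m`, so it sends `m` to a maximal ideal,
which rules out `m S = S`.
-/

open Ideal

lemma Module.FaithfullyFlat.of_flat_of_map_ne_top {A B : Type*} [CommRing A] [CommRing B]
    [Algebra A B] [Module.Flat A B]
    (h : ∀ m : Ideal A, m.IsMaximal → m.map (algebraMap A B) ≠ ⊤) :
    Module.FaithfullyFlat A B :=
  ⟨fun m hm ↦ by
    rw [Ideal.smul_top_eq_map]
    exact (Submodule.restrictScalars_eq_top_iff _ _ _).ne.mpr (h m hm)⟩

lemma Ideal.map_ne_top_of_quotientMap_bijective {R S : Type*} [CommRing R] [CommRing S]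
    {f : R →+* S} {I : Ideal R} {J : Ideal S} {H : I ≤ J.comap f}
    (hbij : Function.Bijective (quotientMap J f H)) {m : Ideal R} [m.IsMaximal] (hIm : I ≤ m) :
    m.map f ≠ ⊤ := by
  have hcomp : (Quotient.mk J).comp f = (quotientMap J f H).comp (Quotient.mk I) :=
    (quotientMap_comp_mk H).symm
  have hsurj : Function.Surjective ((Quotient.mk J).comp f) := by
    rw [hcomp]
    exact hbij.surjective.comp Quotient.mk_surjective
  have hker : RingHom.ker ((Quotient.mk J).comp f) = I := by
    rw [hcomp, ← RingHom.comap_ker, (RingHom.injective_iff_ker_eq_bot _).mp hbij.injective,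
      ← RingHom.ker_eq_comap_bot, mk_ker]
  intro htop
  apply (IsMaximal.map_of_surjective_of_ker_le hsurj (hker ▸ hIm)).ne_top
  rw [← map_map, htop, map_top]

/-- Let `R ⊆ S` be commutative rings (an injective algebra map) with a common
element `π` such that the inclusion is flat, `π` lies in the Jacobson radical of both `R` and
`S`, and the induced map `R/πR → S/πS` is an isomorphism.  Then `R → S` is faithfully flat. -/
theorem statement_7 {R S : Type*} [CommRing R] [CommRing S] [Algebra R S]
    (π : R)
    (hflat : Module.Flat R S)
    (hJR : π ∈ Ideal.jacobson (⊥ : Ideal R))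
    (hbij : Function.Bijective
      (show R ⧸ Ideal.span {π} →+* S ⧸ Ideal.span {algebraMap R S π} from
        Ideal.quotientMap (Ideal.span {algebraMap R S π}) (algebraMap R S)
          (by rw [Ideal.span_le, Set.singleton_subset_iff]
              exact Ideal.mem_comap.mpr (Ideal.subset_span rfl)))) :
    Module.FaithfullyFlat R S :=
  Module.FaithfullyFlat.of_flat_of_map_ne_top fun m hm ↦
    map_ne_top_of_quotientMap_bijective hbij <|
      span_singleton_le_iff_mem m |>.mpr <| mem_sInf.mp hJR ⟨bot_le, hm⟩
end

section
/- Let R be an integral domain which is a principal ideal domain, and let R₀ ⊆ R be a subring such that R is a finitely generated projective R₀-module, with the property that every nonzero prime ideal of R contracts to a nonzero ideal of R₀ (lying over). Then any finitely generated R-module M which is projective over R₀ is torsion-free over R, hence free over R. -/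
/-- Let `R` be a principal ideal domain and `R₀ ⊆ R` a subring such that `R`
is finite projective over `R₀` and every nonzero prime ideal of `R` contracts to a nonzero
ideal of `R₀` (lying over).  Then any finite `R`-module `M` which is projective over `R₀` is
torsion-free over `R`, hence free over `R`. -/
theorem statement_18 {R : Type*} [CommRing R] [IsDomain R] [IsPrincipalIdealRing R]
    (R₀ : Subring R) [Module.Finite ↥R₀ R] [Module.Projective ↥R₀ R]
    (hlying : ∀ P : Ideal R, P.IsPrime → P ≠ ⊥ → Ideal.comap R₀.subtype P ≠ ⊥)
    {M : Type*} [AddCommGroup M] [Module R M] [Module.Finite R M]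
    [Module.Projective ↥R₀ M] :
    (∀ (r : R) (m : M), r • m = 0 → r = 0 ∨ m = 0) ∧ Module.Free R M := by
  -- M is torsion-free over R₀ since it is projective over the domain R₀.
  have htf₀ : ∀ (y : ↥R₀) (m : M), y • m = 0 → y = 0 ∨ m = 0 := by
    intro y m hym
    obtain ⟨s, hs⟩ := (Module.projective_def.mp ‹Module.Projective ↥R₀ M›)
    by_cases hy : y = 0
    · exact Or.inl hy
    · right
      have h1 : y • s m = 0 := by rw [← map_smul, hym, map_zero]
      have h2 : s m = 0 := by
        ext i
        have := congrArg (fun f => f i) h1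
        simp only [Finsupp.smul_apply, Finsupp.zero_apply, smul_eq_mul] at this
        exact_mod_cast (mul_eq_zero.mp this).resolve_left hy
      have := hs m
      rw [h2, map_zero] at this
      exact this.symm
  have htf : ∀ (r : R) (m : M), r • m = 0 → r = 0 ∨ m = 0 := by
    intro r m hrm
    by_cases hr : r = 0
    · exact Or.inl hr
    right
    -- r is integral over R₀ since R is finite over R₀
    have hint : IsIntegral ↥R₀ r := IsIntegral.of_finite ↥R₀ r
    have hcomap : (Ideal.span {r}).comap (algebraMap ↥R₀ R) ≠ ⊥ :=
      Ideal.comap_ne_bot_of_integral_mem hr (Ideal.mem_span_singleton_self r) hint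
    obtain ⟨y, hy_mem, hy_ne⟩ := Submodule.exists_mem_ne_zero_of_ne_bot hcomap
    have hy_span : algebraMap ↥R₀ R y ∈ Ideal.span {r} := hy_mem
    obtain ⟨s, hs⟩ := Ideal.mem_span_singleton'.mp hy_span
    -- y • m = (s * r) • m = s • (r • m) = 0
    have hym : y • m = 0 := by
      have hcoe : y • m = (algebraMap ↥R₀ R y) • m := rfl
      rw [hcoe, ← hs, mul_smul, hrm, smul_zero]
    exact (htf₀ y m hym).resolve_left hy_ne
  have : NoZeroSMulDivisors R M := ⟨fun {r m} h => htf r m h⟩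
  exact ⟨htf, Module.free_of_finite_type_torsion_free'⟩
end
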